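/- Let K be a field and A = {u_1,...,u_n} a set of monomials of the same degree in K[t_1,...,t_d]. Suppose the toric ring K[A] is strongly Koszul and that the toric ideal I_A contains no quadratic binomial of the form x_i^2 − x_j x_k. Then K[A] is compressed, i.e., the initial ideal in_<(I_A) is a radical ideal for every reverse lexicographic order <. -/

import Mathlib

/-!
Common definitions: toric ideals/rings of monomial families, strong Koszulness
with respect to a system of algebra generators, initial ideals with respect to
a relation on exponent vectors, (reduced) Gröbner bases, the (graded) reverse
lexicographic order induced by an ordering of the variables, minimal monomial
generators, and compressedness.
-/

open MvPolynomial

noncomputable section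

/-- The total degree of an exponent vector. -/
def expDeg {n : ℕ} (d : Fin n →₀ ℕ) : ℕ := d.sum fun _ e => e

/-- The toric ideal `I_A ⊆ K[x_1,…,x_n]` of the family of monomials
`u i = t^(a i)` in `K[t_1,…,t_d]`: the kernel of `π : x_i ↦ u_i`. -/
def toricIdeal (K : Type) [Field K] {n d : ℕ} (a : Fin n → (Fin d →₀ ℕ)) :
    Ideal (MvPolynomial (Fin n) K) :=
  RingHom.ker (MvPolynomial.aeval
    (fun i => (MvPolynomial.monomial (a i) (1 : K) : MvPolynomial (Fin d) K)) :
      MvPolynomial (Fin n) K →ₐ[K] MvPolynomial (Fin d) K).toRingHom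

/-- The toric ring `K[A] ⊆ K[t_1,…,t_d]` generated by the monomials `t^(a i)`. -/
def toricRing (K : Type) [Field K] {n d : ℕ} (a : Fin n → (Fin d →₀ ℕ)) :
    Subalgebra K (MvPolynomial (Fin d) K) :=
  Algebra.adjoin K (Set.range fun i => (MvPolynomial.monomial (a i) (1 : K)))

/-- The generator `u_i = t^(a i)`, as an element of the toric ring `K[A]`. -/
def toricGen (K : Type) [Field K] {n d : ℕ} (a : Fin n → (Fin d →₀ ℕ)) (i : Fin n) :
    toricRing K a :=
  ⟨MvPolynomial.monomial (a i) (1 : K), Algebra.subset_adjoin (Set.mem_range_self i)⟩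

/-- A commutative ring `R` is strongly Koszul with respect to the system of
generators `u_1,…,u_n` (of its maximal graded ideal) if for every chain
`i_1 < i_2 < ⋯ < i_r` of indices and every `j = 1,…,r` the colon ideal
`(u_{i_1},…,u_{i_{j-1}}) : u_{i_j}` is generated by a subset of `{u_1,…,u_n}`. -/
def StronglyKoszulWith {R : Type} [CommRing R] {n : ℕ} (u : Fin n → R) : Prop :=
  ∀ (r : ℕ) (c : Fin r → Fin n), StrictMono c → ∀ j : Fin r,
    ∃ S : Set R, S ⊆ Set.range u ∧
      Submodule.colon (Ideal.span ((fun k => u (c k)) '' {k : Fin r | k < j}))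
        (Ideal.span {u (c j)}) = Ideal.span S

/-- The toric ring `K[A]` is strongly Koszul (with respect to its monomial
generators `u_1,…,u_n`, which form its distinguished minimal system of
generators of the same degree). -/
def ToricStronglyKoszul (K : Type) [Field K] {n d : ℕ} (a : Fin n → (Fin d →₀ ℕ)) : Prop :=
  StronglyKoszulWith (toricGen K a)

/-- `dd` is the exponent vector of the initial (leading) monomial of `f` with
respect to the strict comparison `lt` on exponent vectors. -/
def IsInitialExp {K : Type} [Field K] {n : ℕ}
    (lt : (Fin n →₀ ℕ) → (Fin n →₀ ℕ) → Prop)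
    (f : MvPolynomial (Fin n) K) (dd : Fin n →₀ ℕ) : Prop :=
  dd ∈ f.support ∧ ∀ d' ∈ f.support, d' ≠ dd → lt d' dd

/-- The initial ideal `in_lt(I)`: the monomial ideal generated by the initial
monomials of the nonzero elements of `I`. -/
def initialIdeal {K : Type} [Field K] {n : ℕ}
    (lt : (Fin n →₀ ℕ) → (Fin n →₀ ℕ) → Prop)
    (I : Ideal (MvPolynomial (Fin n) K)) : Ideal (MvPolynomial (Fin n) K) :=
  Ideal.span {m | ∃ f ∈ I, ∃ dd, IsInitialExp lt f dd ∧
    m = MvPolynomial.monomial dd (1 : K)}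

/-- `G` is the reduced Gröbner basis of `I` with respect to the strict
comparison `lt` (coming from a monomial order): the elements of `G` lie in `I`,
are monic, their initial monomials generate the initial ideal of `I`,
and no monomial occurring in an element of `G` is divisible by the initial
monomial of another element of `G`. -/
def IsReducedGB {K : Type} [Field K] {n : ℕ}
    (lt : (Fin n →₀ ℕ) → (Fin n →₀ ℕ) → Prop)
    (I : Ideal (MvPolynomial (Fin n) K)) (G : Finset (MvPolynomial (Fin n) K)) : Prop :=
  (∀ g ∈ G, g ∈ I) ∧
  (∀ g ∈ G, ∃ dd, IsInitialExp lt g dd ∧ MvPolynomial.coeff dd g = 1) ∧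
  (initialIdeal lt I =
    Ideal.span {m | ∃ g ∈ G, ∃ dd, IsInitialExp lt g dd ∧
      m = MvPolynomial.monomial dd (1 : K)}) ∧
  (∀ g ∈ G, ∀ g' ∈ G, g' ≠ g → ∀ d' ∈ g.support, ∀ dd, IsInitialExp lt g' dd → ¬ dd ≤ d')

/-- The strict comparison of the (graded) reverse lexicographic order induced by
the ordering `x_{ord 0} < x_{ord 1} < ⋯ < x_{ord (n-1)}` of the variables:
`x < y` iff `deg x < deg y`, or the degrees agree and `x` has a strictly larger
exponent than `y` at the smallest variable where they differ. -/
def rlexLT {n : ℕ} (ord : Fin n ≃ Fin n) (x y : Fin n →₀ ℕ) : Prop :=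
  expDeg x < expDeg y ∨ (expDeg x = expDeg y ∧
    ∃ p : Fin n, y (ord p) < x (ord p) ∧ ∀ q : Fin n, q < p → x (ord q) = y (ord q))

/-- `dd` is (the exponent vector of) a member of `G(I)`, the minimal system of
monomial generators of the monomial ideal `I`: the monomial `x^dd` lies in `I`
but no proper divisor of it does. -/
def IsMinGen {K : Type} [Field K] {n : ℕ} (I : Ideal (MvPolynomial (Fin n) K))
    (dd : Fin n →₀ ℕ) : Prop :=
  MvPolynomial.monomial dd (1 : K) ∈ I ∧
  ∀ d' : Fin n →₀ ℕ, d' ≤ dd → d' ≠ dd → MvPolynomial.monomial d' (1 : K) ∉ I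

/-- The toric ring `K[A]` is compressed: the initial ideal of `I_A` is radical
for every reverse lexicographic order. -/
def ToricCompressed (K : Type) [Field K] {n d : ℕ} (a : Fin n → (Fin d →₀ ℕ)) : Prop :=
  ∀ ord : Fin n ≃ Fin n,
    (initialIdeal (rlexLT ord) (toricIdeal K a)).radical
      = initialIdeal (rlexLT ord) (toricIdeal K a)

/-- The strict comparison on exponent vectors associated to a monomial order. -/
def MonomialOrder.ltRel {σ : Type*} (m : MonomialOrder σ) :
    (σ →₀ ℕ) → (σ →₀ ℕ) → Prop :=
  fun a b => m.toSyn a < m.toSyn b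

/-- A quadratic binomial: a difference of two (monic) monomials of degree 2. -/
def IsQuadBinomial {K : Type} [Field K] {n : ℕ} (g : MvPolynomial (Fin n) K) : Prop :=
  ∃ b c : Fin n →₀ ℕ, expDeg b = 2 ∧ expDeg c = 2 ∧
    g = MvPolynomial.monomial b (1 : K) - MvPolynomial.monomial c (1 : K)

end

open MvPolynomial

/-!
`in_<(I_A)` is spanned by the monomials `x^u` with `x^u - x^v ∈ I_A`, `v <_rlex u`, and a monomial
ideal is radical when its minimal generators are squarefree. Let `x^u` be a minimal generator, with
partner `x^v`. Cancelling a common variable would give a smaller generator, so `u` and `v` have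
disjoint supports; hence the first variable `x_z` (in the order defining `<`) at which they differ
divides `x^v` and precedes every variable of `x^u`. Consequently, for every proper divisor `x^W` of
`x^u`, `u_z` does not divide `π(x^W)` in `K[A]`: otherwise `x^W - x_z x^ρ` would be a binomial
of `I_A` with leading monomial `x^W`.

If `x_α² ∣ x^u`, strong Koszulness lets us peel the variables of `x^u / x_α²` off one at a time
while keeping a generator `u_k` dividing the image of what is left. Either some peeled part yields
a proper divisor `x^W` as above, or we end with `u_k ∣ u_α²`, i.e. `x_α² - x_k x_m ∈ I_A` with
`k ≠ α`.
-/

theorem expDeg_eq_degree {n : ℕ} (x : Fin n →₀ ℕ) : expDeg x = x.degree := rfl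

namespace Finsupp

variable {σ : Type*}

theorem exists_eq_add_single_of_ne_zero {x : σ →₀ ℕ} {i : σ} (h : x i ≠ 0) :
    ∃ y, x = y + single i 1 :=
  ⟨x - single i 1, (tsub_add_cancel_of_le (single_le_iff.mpr (Nat.one_le_iff_ne_zero.mpr h))).symm⟩

theorem lt_add_single_one (x : σ →₀ ℕ) (i : σ) : x < x + single i 1 :=
  lt_add_of_pos_right x (pos_iff_ne_zero.mpr (single_ne_zero.mpr one_ne_zero))

theorem exists_eq_single_of_degree_eq_one {x : σ →₀ ℕ} (h : x.degree = 1) :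
    ∃ i, x = single i 1 := by
  obtain ⟨i, hi⟩ := support_nonempty_iff.mpr (show x ≠ 0 by rintro rfl; simp at h)
  obtain ⟨y, rfl⟩ := exists_eq_add_single_of_ne_zero (mem_support_iff.mp hi)
  rw [map_add, degree_single, add_eq_right, degree_eq_zero_iff] at h
  exact ⟨i, by rw [h, zero_add]⟩

theorem le_of_le_nsmul_of_forall_le_one {s x : σ →₀ ℕ} {k : ℕ} (hs : ∀ i, s i ≤ 1)
    (h : s ≤ k • x) : s ≤ x := by
  intro i
  have hi := h i
  rw [smul_apply, smul_eq_mul] at hi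
  have := hs i
  rcases Nat.eq_zero_or_pos (x i) with h0 | _
  · rw [h0, mul_zero] at hi
    omega
  · omega

end Finsupp

section RevLex

variable {n : ℕ} (ord : Fin n ≃ Fin n)

theorem rlexLT_irrefl (x : Fin n →₀ ℕ) : ¬ rlexLT ord x x := by
  rintro (h | ⟨-, p, hp, -⟩) <;> exact lt_irrefl _ ‹_›

theorem rlexLT_of_add_right {x y c : Fin n →₀ ℕ} (h : rlexLT ord (x + c) (y + c)) :
    rlexLT ord x y := by
  simpa only [rlexLT, expDeg_eq_degree, map_add, Finsupp.add_apply, add_lt_add_iff_right,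
    add_left_inj] using h

theorem rlexLT_of_forall_le_apply_eq_zero {x y : Fin n →₀ ℕ} {p : Fin n}
    (hdeg : expDeg y = expDeg x) (hx : ∀ q ≤ p, x (ord q) = 0) (hy : y (ord p) ≠ 0) :
    rlexLT ord y x := by
  obtain ⟨p₀, hp₀, hmin⟩ := wellFounded_lt.has_min {q | y (ord q) ≠ x (ord q)}
    ⟨p, by simpa [hx p le_rfl] using hy⟩
  have hp₀p : p₀ ≤ p := not_lt.mp fun h => hmin p (by simpa [hx p le_rfl] using hy) h
  have hxp₀ := hx p₀ hp₀p
  refine Or.inr ⟨hdeg, p₀, ?_, fun q hq => not_not.mp fun hne => hmin q hne hq⟩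
  rw [hxp₀]
  exact Nat.pos_of_ne_zero (by simpa [hxp₀] using hp₀)

end RevLex

theorem Ideal.isRadical_span_monomial_of_minimal_le_one {σ R : Type*} [LinearOrder σ]
    [WellFoundedGT σ] [CommRing R] [IsReduced R] {S : Set (σ →₀ ℕ)}
    (hS : ∀ s, Minimal (· ∈ S) s → ∀ i, s i ≤ 1) :
    (Ideal.span ((fun s => monomial s (1 : R)) '' S)).IsRadical := by
  set J := Ideal.span ((fun s => monomial s (1 : R)) '' S)
  let m : MonomialOrder σ := .lex
  have hlead : ∀ f ∈ J.radical, m.leadingTerm f ∈ J := by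
    intro f ⟨k, hk⟩
    rcases eq_or_ne f 0 with rfl | hf
    · simp
    obtain ⟨s, hs, hsk⟩ := mem_ideal_span_monomial_image.mp hk _
      (m.degree_mem_support (pow_ne_zero k hf))
    obtain ⟨s', hs's, hs'⟩ := exists_minimal_le_of_wellFoundedLT (· ∈ S) s hs
    refine mem_ideal_span_monomial_image.mpr fun x hx => ⟨s', hs'.prop, ?_⟩
    rw [Finset.mem_singleton.mp (support_monomial_subset hx)]
    rw [m.degree_pow] at hsk
    exact Finsupp.le_of_le_nsmul_of_forall_le_one (hS s' hs') (hs's.trans hsk)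
  intro f hf
  induction hd : m.toSyn (m.degree f) using WellFoundedLT.induction generalizing f with
  | _ D ih =>
  by_cases h : f - m.leadingTerm f = 0
  · exact sub_eq_zero.mp h ▸ hlead f hf
  · have hlt := m.degree_sub_leadingTerm_lt_degree (m.degree_ne_zero_of_sub_leadingTerm_ne_zero h)
    simpa using J.add_mem
      (ih _ (hd ▸ hlt) (J.radical.sub_mem hf (Ideal.le_radical (hlead f hf))) rfl)
      (hlead f hf)

section Toric

variable {K : Type} [Field K] {n d : ℕ} (a : Fin n → (Fin d →₀ ℕ))

/-- The exponent map `ℕⁿ → ℕᵈ` of `π`: `π(x^e) = t^(toricExp a e)`. -/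
noncomputable def toricExp : (Fin n →₀ ℕ) →+ (Fin d →₀ ℕ) :=
  (Finsupp.linearCombination ℕ a).toAddMonoidHom

@[simp]
theorem toricExp_single (i : Fin n) (k : ℕ) : toricExp a (Finsupp.single i k) = k • a i :=
  Finsupp.linearCombination_single ℕ k i

theorem aeval_monomial_eq_monomial_toricExp (e : Fin n →₀ ℕ) (c : K) :
    aeval (fun i => monomial (a i) (1 : K)) (monomial e c) = monomial (toricExp a e) c := by
  induction e using Finsupp.induction_linear generalizing c with
  | zero => simp
  | add e₁ e₂ h₁ h₂ =>
    rw [← mul_one c, ← monomial_mul, map_mul, h₁, h₂, monomial_mul, map_add]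
  | single i k =>
    rw [aeval_monomial, Finsupp.prod_single_index (by rw [pow_zero]), monomial_pow, one_pow,
      algebraMap_eq, C_mul_monomial, mul_one, toricExp_single]

theorem aeval_eq_sum_monomial_toricExp (p : MvPolynomial (Fin n) K) :
    aeval (fun i => monomial (a i) (1 : K)) p =
      ∑ v ∈ p.support, monomial (toricExp a v) (coeff v p) := by
  conv_lhs => rw [p.as_sum]
  simp only [map_sum, aeval_monomial_eq_monomial_toricExp]

theorem mem_toricIdeal_iff {f : MvPolynomial (Fin n) K} :
    f ∈ toricIdeal K a ↔ aeval (fun i => monomial (a i) (1 : K)) f = 0 :=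
  Iff.rfl

theorem monomial_sub_monomial_mem_toricIdeal {b c : Fin n →₀ ℕ}
    (h : toricExp a b = toricExp a c) :
    monomial b (1 : K) - monomial c 1 ∈ toricIdeal K a := by
  rw [mem_toricIdeal_iff, map_sub, aeval_monomial_eq_monomial_toricExp,
    aeval_monomial_eq_monomial_toricExp, h, sub_self]

/-- The coefficient of `t^(toricExp a u)` in `π f = 0` is the sum of the coefficients of `f`
over the fibre of `u`. -/
theorem exists_ne_toricExp_eq_of_mem_toricIdeal {f : MvPolynomial (Fin n) K}
    (hf : f ∈ toricIdeal K a) {u : Fin n →₀ ℕ} (hu : u ∈ f.support) :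
    ∃ v ∈ f.support, v ≠ u ∧ toricExp a v = toricExp a u := by
  classical
  by_contra! h
  have hcoeff := congrArg (coeff (toricExp a u)) (aeval_eq_sum_monomial_toricExp a f)
  rw [(mem_toricIdeal_iff a).mp hf, coeff_zero, coeff_sum,
    Finset.sum_eq_single_of_mem u hu fun v hv hvu => by rw [coeff_monomial, if_neg (h v hv hvu)],
    coeff_monomial, if_pos rfl] at hcoeff
  exact mem_support_iff.mp hu hcoeff.symm

/-- `u` is the exponent of the leading monomial of a binomial `x^u - x^v ∈ I_A`. -/
def IsBinomialLead (ord : Fin n ≃ Fin n) (u : Fin n →₀ ℕ) : Prop :=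
  ∃ v, toricExp a v = toricExp a u ∧ rlexLT ord v u

theorem initialIdeal_toricIdeal_eq (ord : Fin n ≃ Fin n) :
    initialIdeal (rlexLT ord) (toricIdeal K a) =
      Ideal.span ((fun u => monomial u (1 : K)) '' {u | IsBinomialLead a ord u}) := by
  classical
  refine le_antisymm (Ideal.span_le.mpr ?_) (Ideal.span_le.mpr ?_)
  · rintro _ ⟨f, hf, u, hu, rfl⟩
    obtain ⟨v, hv, hvu, hfib⟩ := exists_ne_toricExp_eq_of_mem_toricIdeal a hf hu.1
    exact Ideal.subset_span ⟨u, ⟨v, hfib, hu.2 v hv hvu⟩, rfl⟩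
  · rintro _ ⟨u, ⟨v, hfib, hvu⟩, rfl⟩
    have hne : v ≠ u := by rintro rfl; exact rlexLT_irrefl ord v hvu
    refine Ideal.subset_span ⟨_, monomial_sub_monomial_mem_toricIdeal a hfib.symm, u, ⟨?_, ?_⟩, rfl⟩
    · simp [mem_support_iff, coeff_monomial, hne]
    · intro w hw hwu
      have := support_sub (Fin n) _ _ hw
      simp only [Finset.mem_union, support_monomial, one_ne_zero, if_false,
        Finset.mem_singleton, hwu, false_or] at this
      exact this ▸ hvu

end Toric

section ToricRing

variable {K : Type} [Field K] {n d : ℕ} (a : Fin n → (Fin d →₀ ℕ))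

theorem toricRing_eq_range : toricRing K a = (aeval fun i => monomial (a i) (1 : K)).range :=
  Algebra.adjoin_range_eq_range_aeval K _

theorem monomial_toricExp_mem_toricRing (w : Fin n →₀ ℕ) :
    monomial (toricExp a w) (1 : K) ∈ toricRing K a := by
  rw [toricRing_eq_range]
  exact ⟨monomial w 1, aeval_monomial_eq_monomial_toricExp a w 1⟩

theorem exists_toricExp_eq_of_mem_support {x : MvPolynomial (Fin d) K} (hx : x ∈ toricRing K a)
    {μ : Fin d →₀ ℕ} (hμ : μ ∈ x.support) : ∃ w, μ = toricExp a w := by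
  classical
  rw [toricRing_eq_range] at hx
  obtain ⟨p, rfl⟩ := (AlgHom.mem_range _).mp hx
  rw [aeval_eq_sum_monomial_toricExp] at hμ
  obtain ⟨v, -, hv⟩ := Finset.mem_biUnion.mp (support_sum hμ)
  exact ⟨v, Finset.mem_singleton.mp (support_monomial_subset hv)⟩

theorem exists_toricGen_mem_of_mem_span {S : Set (toricRing K a)}
    (hS : S ⊆ Set.range (toricGen K a)) {x : toricRing K a} (hx : x ∈ Ideal.span S)
    {μ : Fin d →₀ ℕ} (hμ : μ ∈ (x : MvPolynomial (Fin d) K).support) :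
    ∃ l, toricGen K a l ∈ S ∧ ∃ w, μ = a l + toricExp a w := by
  classical
  induction hx using Submodule.span_induction generalizing μ with
  | mem y hy =>
    obtain ⟨l, rfl⟩ := hS hy
    simp only [toricGen, support_monomial, one_ne_zero, if_false, Finset.mem_singleton] at hμ
    exact ⟨l, hy, 0, by simp [hμ]⟩
  | zero => simp at hμ
  | add y z _ _ hy hz =>
    rcases Finset.mem_union.mp (support_add hμ) with h | h
    exacts [hy h, hz h]
  | smul r y _ hy =>
    rw [smul_eq_mul, Subalgebra.coe_mul] at hμ
    obtain ⟨μ₁, hμ₁, μ₂, hμ₂, rfl⟩ := Finset.mem_add.mp (support_mul _ _ hμ)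
    obtain ⟨w₁, rfl⟩ := exists_toricExp_eq_of_mem_support a r.2 hμ₁
    obtain ⟨l, hl, w₂, rfl⟩ := hy hμ₂
    exact ⟨l, hl, w₁ + w₂, by rw [map_add]; abel⟩

theorem StronglyKoszulWith.exists_colon_eq_span {R : Type} [CommRing R] {u : Fin n → R}
    (h : StronglyKoszulWith u) {i k : Fin n} (hik : i < k) :
    ∃ S ⊆ Set.range u,
      Submodule.colon (Ideal.span {u i}) (Ideal.span {u k}) = Ideal.span S := by
  obtain ⟨S, hS, hcolon⟩ := h 2 ![i, k] (by simpa [Fin.strictMono_iff_lt_succ] using hik) 1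
  have himage : (fun j => u (![i, k] j)) '' {j | j < 1} = {u i} := by
    ext
    simp [Fin.lt_one_iff]
  exact ⟨S, hS, by rwa [himage] at hcolon⟩

/-- `I_A` is homogeneous. -/
def HomogeneousFibres : Prop :=
  ∀ x y : Fin n →₀ ℕ, toricExp a x = toricExp a y → x.degree = y.degree

theorem homogeneousFibres_of_expDeg_eq {δ : ℕ} (hdeg : ∀ i, expDeg (a i) = δ) (hδ : 0 < δ) :
    HomogeneousFibres a := by
  have key : ∀ x, (toricExp a x).degree = δ * x.degree := by
    intro x
    induction x using Finsupp.induction_linear with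
    | zero => simp
    | add x y hx hy => simp [hx, hy, mul_add]
    | single i k =>
      rw [toricExp_single, map_nsmul, ← expDeg_eq_degree, hdeg, Finsupp.degree_single, smul_eq_mul,
        mul_comm]
  exact fun x y h => Nat.eq_of_mul_eq_mul_left hδ (by rw [← key, ← key, h])

/-- In `K[A]`: if `u_i ∣ t^(toricExp a e) u_k`, then `t^(toricExp a e)` is divisible by a
generator `u_l` with `u_l u_k = u_i u_m`. -/
def ColonExchange : Prop :=
  ∀ i k : Fin n, i ≠ k → ∀ e w : Fin n →₀ ℕ, toricExp a e + a k = a i + toricExp a w →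
    ∃ l m : Fin n, ∃ w' : Fin n →₀ ℕ, toricExp a e = a l + toricExp a w' ∧ a l + a k = a i + a m

theorem ToricStronglyKoszul.exchange_of_lt (hSK : ToricStronglyKoszul K a)
    (hΦ : HomogeneousFibres a) {i k : Fin n} (hik : i < k) {e w : Fin n →₀ ℕ}
    (h : toricExp a e + a k = a i + toricExp a w) :
    ∃ l m : Fin n, ∃ w' : Fin n →₀ ℕ,
      toricExp a e = a l + toricExp a w' ∧ a l + a k = a i + a m := by
  obtain ⟨S, hS, hcolon⟩ := StronglyKoszulWith.exists_colon_eq_span hSK hik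
  have hmem : ∀ x, x ∈ Ideal.span S ↔ x * toricGen K a k ∈ Ideal.span {toricGen K a i} := by
    intro x
    rw [← hcolon, Ideal.mem_colon_span_singleton]
  let te : toricRing K a := ⟨_, monomial_toricExp_mem_toricRing a e⟩
  let tw : toricRing K a := ⟨_, monomial_toricExp_mem_toricRing a w⟩
  have hte : te ∈ Ideal.span S := (hmem te).mpr <| Ideal.mem_span_singleton'.mpr
    ⟨tw, Subtype.ext (by simp [te, tw, toricGen, monomial_mul, h, add_comm])⟩
  obtain ⟨l, hl, w', hw'⟩ := exists_toricGen_mem_of_mem_span a hS hte (μ := toricExp a e)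
    (by simp [te])
  obtain ⟨i', hi', w₃, hw₃⟩ := exists_toricGen_mem_of_mem_span a
    (Set.singleton_subset_iff.mpr ⟨i, rfl⟩) ((hmem _).mp (Ideal.subset_span hl))
    (μ := a l + a k) (by simp [toricGen, monomial_mul])
  have hi'i : a i' = a i := by
    simpa [toricGen, monomial_left_inj] using congrArg Subtype.val hi'
  have hdeg := hΦ (Finsupp.single l 1 + Finsupp.single k 1) (Finsupp.single i 1 + w₃)
    (by simp [hw₃, hi'i])
  rw [map_add, map_add, Finsupp.degree_single, Finsupp.degree_single, Finsupp.degree_single]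
    at hdeg
  obtain ⟨m, rfl⟩ := Finsupp.exists_eq_single_of_degree_eq_one (x := w₃) (by omega)
  exact ⟨l, m, w', hw', by simpa [hi'i] using hw₃⟩

theorem ToricStronglyKoszul.colonExchange (hSK : ToricStronglyKoszul K a)
    (hΦ : HomogeneousFibres a) : ColonExchange a := by
  intro i k hik e w h
  rcases hik.lt_or_gt with hik | hki
  · exact hSK.exchange_of_lt a hΦ hik h
  · -- read the same relation as `u_k ∣ t^(toricExp a w) u_i`
    obtain ⟨l, m, w', hw, hlm⟩ := hSK.exchange_of_lt a hΦ hki (e := w) (w := e)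
      (by rw [add_comm, ← h, add_comm])
    refine ⟨m, l, w', add_left_cancel (a := a k) ?_, by rw [add_comm, ← hlm, add_comm]⟩
    calc a k + toricExp a e = a i + toricExp a w := by rw [add_comm, h]
      _ = (a l + a i) + toricExp a w' := by rw [hw]; abel
      _ = a k + (a m + toricExp a w') := by rw [hlm, add_assoc]

def NoSquareRelation : Prop :=
  ∀ α l m : Fin n, 2 • a α = a l + a m → l = α

theorem noSquareRelation_of_forall_mem_toricIdeal
    (h : ∀ i j k : Fin n, monomial (Finsupp.single i 2) (1 : K)
      - monomial (Finsupp.single j 1 + Finsupp.single k 1) (1 : K) ∈ toricIdeal K a →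
      Finsupp.single i 2 = Finsupp.single j 1 + Finsupp.single k 1) :
    NoSquareRelation a := by
  intro α l m hrel
  have := DFunLike.congr_fun
    (h α l m (monomial_sub_monomial_mem_toricIdeal a (by simp [hrel]))) l
  by_contra hne
  simp only [Finsupp.single_apply, Finsupp.add_apply, if_neg (Ne.symm hne), if_true] at this
  omega

end ToricRing

section LeadingExponents

variable {n d : ℕ} {a : Fin n → (Fin d →₀ ℕ)}

theorem eq_of_toricExp_single_two_eq (hΦ : HomogeneousFibres a) (hsq : NoSquareRelation a)
    {α k : Fin n} {ω : Fin n →₀ ℕ}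
    (h : toricExp a (Finsupp.single α 2) = a k + toricExp a ω) : k = α := by
  have hdeg := hΦ (Finsupp.single α 2) (Finsupp.single k 1 + ω)
    (by rw [h, map_add, toricExp_single, one_smul])
  rw [map_add, Finsupp.degree_single, Finsupp.degree_single] at hdeg
  obtain ⟨m, rfl⟩ := Finsupp.exists_eq_single_of_degree_eq_one (x := ω) (by omega)
  exact hsq α k m (by simpa using h)

/-- In `K[A]`: `x^u = x_α² x^S x^R` with `x_k ∤ x_α² x^S`, `u_k ∣ π(x_α² x^S)` and
`u_z ∣ u_k π(x^R)`. Moving a variable `x_c` from `x^S` to `x^R` and replacing `u_k` by the `u_l` of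
`ColonExchange` preserves this, unless `x_l x_c x^R` is the required `x^W`; at `S = 0` it
contradicts `NoSquareRelation`. -/
theorem exists_lt_toricExp_eq_add_of_peeling (hΦ : HomogeneousFibres a) (hex : ColonExchange a)
    (hsq : NoSquareRelation a) {u S R ω ρ : Fin n →₀ ℕ} {z α k : Fin n}
    (hu : Finsupp.single α 2 + S + R = u) (hk : (Finsupp.single α 2 + S : Fin n →₀ ℕ) k = 0)
    (hω : toricExp a (Finsupp.single α 2 + S) = a k + toricExp a ω)
    (hρ : a k + toricExp a R = a z + toricExp a ρ) :
    ∃ W < u, ∃ ρ', toricExp a W = a z + toricExp a ρ' := by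
  induction S using WellFoundedLT.induction generalizing R ω ρ k with
  | _ S ih =>
  obtain rfl | hS := eq_or_ne S 0
  · rw [add_zero] at hk hω
    rw [eq_of_toricExp_single_two_eq hΦ hsq hω] at hk
    simp at hk
  obtain ⟨c, hc⟩ := Finsupp.support_nonempty_iff.mpr hS
  obtain ⟨S', rfl⟩ := Finsupp.exists_eq_add_single_of_ne_zero (Finsupp.mem_support_iff.mp hc)
  have hkc : k ≠ c := by rintro rfl; simp at hk
  obtain ⟨l, m, w, hl, hlm⟩ := hex k c hkc (Finsupp.single α 2 + S') ω
    (by rw [← hω, ← add_assoc, map_add (toricExp a) (_ + _), toricExp_single, one_smul])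
  have hρ' : a l + toricExp a (R + Finsupp.single c 1) =
      a z + toricExp a (ρ + Finsupp.single m 1) := by
    simp only [map_add, toricExp_single, one_smul]
    calc a l + (toricExp a R + a c) = (a l + a c) + toricExp a R := by abel
      _ = (a k + toricExp a R) + a m := by rw [hlm]; abel
      _ = a z + (toricExp a ρ + a m) := by rw [hρ, add_assoc]
  by_cases hl0 : (Finsupp.single α 2 + S' : Fin n →₀ ℕ) l = 0
  · exact ih S' (Finsupp.lt_add_single_one S' c) (by rw [← hu]; abel) hl0 hl hρ'
  obtain ⟨S'', hS''⟩ := Finsupp.exists_eq_add_single_of_ne_zero hl0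
  have hS''0 : S'' ≠ 0 := by
    rintro rfl
    have := congrArg Finsupp.degree hS''
    rw [map_add, zero_add, Finsupp.degree_single, Finsupp.degree_single] at this
    omega
  refine ⟨Finsupp.single l 1 + (R + Finsupp.single c 1), ?_, ρ + Finsupp.single m 1,
    by rw [map_add, toricExp_single, one_smul, hρ']⟩
  calc _ < S'' + (Finsupp.single l 1 + (R + Finsupp.single c 1)) :=
        lt_add_of_pos_left _ (pos_iff_ne_zero.mpr hS''0)
    _ = u := by rw [← hu, ← add_assoc (Finsupp.single α 2), hS'']; abel

variable (ord : Fin n ≃ Fin n)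

theorem apply_eq_zero_or_apply_eq_zero_of_minimal {u v : Fin n →₀ ℕ}
    (hu : Minimal (IsBinomialLead a ord) u) (hv : toricExp a v = toricExp a u)
    (hvu : rlexLT ord v u) (t : Fin n) : u t = 0 ∨ v t = 0 := by
  by_contra! h
  obtain ⟨u', rfl⟩ := Finsupp.exists_eq_add_single_of_ne_zero h.1
  obtain ⟨v', rfl⟩ := Finsupp.exists_eq_add_single_of_ne_zero h.2
  refine hu.not_prop_of_lt (Finsupp.lt_add_single_one u' t)
    ⟨v', ?_, rlexLT_of_add_right ord hvu⟩
  simpa using hv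

theorem apply_le_one_of_minimal (hΦ : HomogeneousFibres a) (hex : ColonExchange a)
    (hsq : NoSquareRelation a) {u : Fin n →₀ ℕ} (hu : Minimal (IsBinomialLead a ord) u)
    (x : Fin n) : u x ≤ 1 := by
  by_contra! hx
  obtain ⟨v, hvu, hlt⟩ := hu.prop
  have hdisj := apply_eq_zero_or_apply_eq_zero_of_minimal ord hu hvu hlt
  obtain ⟨p, hp, hbefore⟩ : ∃ p, u (ord p) < v (ord p) ∧ ∀ q < p, v (ord q) = u (ord q) := by
    rcases hlt with h | ⟨-, h⟩
    · exact absurd (hΦ v u hvu) h.ne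
    · exact h
  have hzero : ∀ q ≤ p, u (ord q) = 0 := by
    intro q hq
    rcases hq.lt_or_eq with hq | rfl
    · have := hbefore q hq
      rcases hdisj (ord q) with h | h <;> omega
    · rcases hdisj (ord q) with h | h <;> omega
  obtain ⟨v', rfl⟩ := Finsupp.exists_eq_add_single_of_ne_zero (x := v) (i := ord p) (by omega)
  obtain ⟨S, rfl⟩ := le_iff_exists_add.mp (Finsupp.single_le_iff.mpr (show 2 ≤ u x by omega))
  obtain ⟨W, hWu, ρ, hW⟩ := exists_lt_toricExp_eq_add_of_peeling hΦ hex hsq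
    (z := ord p) (R := 0) (ω := v') (ρ := 0) (add_zero _) (hzero p le_rfl)
    (by rw [← hvu, map_add, toricExp_single, one_smul, add_comm]) (by simp)
  -- `x^W` divides `x^u`, so it avoids the variables `x_{ord q}`, `q ≤ p`, unlike `x_{ord p} x^ρ`.
  refine hu.not_prop_of_lt hWu ⟨Finsupp.single (ord p) 1 + ρ, by simp [hW],
    rlexLT_of_forall_le_apply_eq_zero ord (p := p) (hΦ _ _ (by simp [hW])) (fun q hq => ?_)
      (by simp)⟩
  exact Nat.eq_zero_of_le_zero ((hWu.le (ord q)).trans (hzero q hq).le)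

theorem apply_le_one_of_minimal_of_forall_eq_zero (ha : ∀ i, a i = 0) {u : Fin n →₀ ℕ}
    (hu : Minimal (IsBinomialLead a ord) u) (x : Fin n) : u x ≤ 1 := by
  by_contra! hx
  obtain ⟨S, rfl⟩ := le_iff_exists_add.mp (Finsupp.single_le_iff.mpr hx.le)
  have hS : S ≠ 0 := by rintro rfl; simp at hx
  exact hu.not_prop_of_lt (lt_add_of_pos_right _ (pos_iff_ne_zero.mpr hS))
    ⟨0, by simp [ha], Or.inl (by simp [expDeg_eq_degree])⟩

end LeadingExponents

theorem stronglyKoszul_no_square_binomial_implies_compressed_general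
    (K : Type) [Field K] {n d : ℕ} (a : Fin n → (Fin d →₀ ℕ))
    (δ : ℕ) (hdeg : ∀ i, expDeg (a i) = δ)
    (hSK : ToricStronglyKoszul K a)
    (hnoquad : ∀ i j k : Fin n,
      (MvPolynomial.monomial (Finsupp.single i 2) (1 : K)
        - MvPolynomial.monomial (Finsupp.single j 1 + Finsupp.single k 1) (1 : K)
          ∈ toricIdeal K a) →
      Finsupp.single i 2 = Finsupp.single j 1 + Finsupp.single k 1) :
    ToricCompressed K a := by
  intro ord
  rw [initialIdeal_toricIdeal_eq]
  refine (Ideal.isRadical_span_monomial_of_minimal_le_one fun u hu x => ?_).radical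
  rcases Nat.eq_zero_or_pos δ with rfl | hδ
  · exact apply_le_one_of_minimal_of_forall_eq_zero ord
      (fun i => (Finsupp.degree_eq_zero_iff _).mp (hdeg i)) hu x
  · have hΦ := homogeneousFibres_of_expDeg_eq a hdeg hδ
    exact apply_le_one_of_minimal ord hΦ (hSK.colonExchange a hΦ)
      (noSquareRelation_of_forall_mem_toricIdeal a hnoquad) hu x

/-- **(ii) ⟹ (iii) of Theorem 2.1.**  If `K[A]` is strongly Koszul and `I_A`
contains no (nonzero) quadratic binomial of the form `x_i^2 - x_j x_k`, then
`K[A]` is compressed, i.e. `in_<(I_A)` is radical for every reverse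
lexicographic order `<`. -/
theorem stronglyKoszul_no_square_binomial_implies_compressed
    (K : Type) [Field K] {n d : ℕ} (a : Fin n → (Fin d →₀ ℕ))
    (δ : ℕ) (hdeg : ∀ i, expDeg (a i) = δ) (hinj : Function.Injective a)
    (hSK : ToricStronglyKoszul K a)
    (hnoquad : ∀ i j k : Fin n,
      (MvPolynomial.monomial (Finsupp.single i 2) (1 : K)
        - MvPolynomial.monomial (Finsupp.single j 1 + Finsupp.single k 1) (1 : K)
          ∈ toricIdeal K a) →
      Finsupp.single i 2 = Finsupp.single j 1 + Finsupp.single k 1) :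
    ToricCompressed K a :=
  stronglyKoszul_no_square_binomial_implies_compressed_general K a δ hdeg hSK hnoquad
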